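/- Let N ≥ 1 and T ≥ 1 be integers, s a state, M = min(N,T), and L_g = max over 1 ≤ j ≤ M of max(S_j(s) − (j−1), 0). Then 0 ≤ L_g ≤ |s|, the state s̄_{L_g} satisfies S_j(s̄_{L_g}) ≤ j − 1 for every j = 1,…,M, and L_g is minimal with this property: for any L ∈ {0,…,|s|}, if S_j(s̄_L) ≤ j − 1 for every j = 1,…,M, then L ≥ L_g. In particular, when T ≥ N, s̄_{L_g} is a reduced state. -/
import Mathlib


open Finset

/-- System parameters: offloading cost, penalty cost, AMA probability,
local-processing probability, and arrival probabilities. -/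
structure Params where
  Co : ℝ
  Cp : ℝ
  pa : ℝ
  mu : ℝ
  p : ℕ → ℝ

variable {N : ℕ}

/-- Partial sum `S_j(s) = ∑_{i=1}^j n_i` (components of `s` are 0-indexed). -/
def S (s : Fin N → ℕ) (j : ℕ) : ℕ :=
  ∑ i ∈ Finset.univ.filter fun i : Fin N => (i : ℕ) < j, s i

/-- Total number of tasks `|s|`. -/
def tot (s : Fin N → ℕ) : ℕ := S s N

/-- The state obtained by offloading the `L` most imminent tasks of `s`:
`(s̄_L)_i = max(S_i(s) − L, 0) − max(S_{i−1}(s) − L, 0)` (truncated ℕ-subtraction). -/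
def offload (s : Fin N → ℕ) (L : ℕ) : Fin N → ℕ :=
  fun i => (S s ((i : ℕ) + 1) - L) - (S s (i : ℕ) - L)

/-- Deadline shifting: `shift(s) = (n_2, …, n_N, 0)`. -/
def shift (s : Fin N → ℕ) : Fin N → ℕ :=
  fun i => if h : (i : ℕ) + 1 < N then s ⟨(i : ℕ) + 1, h⟩ else 0

/-- Arrival vector `a_k`: the `k`-th standard unit vector for `1 ≤ k ≤ N`, zero for `k = 0`. -/
def avec (k : ℕ) : Fin N → ℕ := fun i => if (i : ℕ) + 1 = k then 1 else 0

/-- Local processing: remove one task of smallest deadline (identity on the zero state). -/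
def proc (s : Fin N → ℕ) : Fin N → ℕ :=
  fun i => if s i ≠ 0 ∧ ∀ j : Fin N, j < i → s j = 0 then s i - 1 else s i

/-- `s''_{Lk} = shift(s̄_L) + a_k`. -/
def sdd (s : Fin N → ℕ) (L k : ℕ) : Fin N → ℕ :=
  fun i => shift (offload s L) i + avec k i

/-- `s'_{Lk} = proc(s''_{Lk})`. -/
def sd (s : Fin N → ℕ) (L k : ℕ) : Fin N → ℕ := proc (sdd s L k)

/-- Instantaneous cost with the AMA: `𝒞^A(s,L) = C_o·L + C_p·max(n_1 − L, 0)`. -/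
def costA (P : Params) (s : Fin N → ℕ) (L : ℕ) : ℝ :=
  P.Co * L + P.Cp * ((S s 1 - L : ℕ) : ℝ)

/-- Instantaneous cost without the AMA: `𝒞^Ā(s) = C_p·n_1`. -/
def costNA (P : Params) (s : Fin N → ℕ) : ℝ := P.Cp * (S s 1 : ℕ)

/-- Expected instantaneous cost `𝒞(s,L)`. -/
def cost (P : Params) (s : Fin N → ℕ) (L : ℕ) : ℝ :=
  P.pa * costA P s L + (1 - P.pa) * costNA P s

/-- The dynamic-programming minimization, given the future-cost function `G`. -/
noncomputable def JofG (P : Params) (G : (Fin N → ℕ) → ℕ → ℝ) (s : Fin N → ℕ) : ℝ :=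
  (Finset.range (tot s + 1)).inf' (Finset.nonempty_range_iff.mpr (Nat.succ_ne_zero _))
    fun L => cost P s L + P.pa * G s L + (1 - P.pa) * G s 0

/-- `G^A_T(s,L)`, defined by recursion on the horizon `T`. -/
noncomputable def GA (P : Params) : ℕ → (Fin N → ℕ) → ℕ → ℝ
  | 0, _, _ => 0
  | T + 1, s, L =>
      P.mu * ∑ k ∈ Finset.range (N + 1), P.p k * JofG P (GA P T) (sd s L k)
        + (1 - P.mu) * ∑ k ∈ Finset.range (N + 1), P.p k * JofG P (GA P T) (sdd s L k)

/-- `J_T(s)` for horizon `T ≥ 1`. -/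
noncomputable def J (P : Params) (T : ℕ) (s : Fin N → ℕ) : ℝ := JofG P (GA P (T - 1)) s

/-- `J^A_T(s,L) = 𝒞^A(s,L) + G^A_{T−1}(s,L)`. -/
noncomputable def JA (P : Params) (T : ℕ) (s : Fin N → ℕ) (L : ℕ) : ℝ :=
  costA P s L + GA P (T - 1) s L

/-- `J^A_T(s) = min_{0 ≤ L ≤ |s|} J^A_T(s,L)`. -/
noncomputable def JAmin (P : Params) (T : ℕ) (s : Fin N → ℕ) : ℝ :=
  (Finset.range (tot s + 1)).inf' (Finset.nonempty_range_iff.mpr (Nat.succ_ne_zero _))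
    (JA P T s)

/-- `J^Ā_T(s) = 𝒞^Ā(s) + G^A_{T−1}(s,0)`. -/
noncomputable def JNA (P : Params) (T : ℕ) (s : Fin N → ℕ) : ℝ :=
  costNA P s + GA P (T - 1) s 0

/-- The optimal offloading decision: the smallest minimizer of `L ↦ J^A_T(s,L)`
over `{0,…,|s|}`. -/
noncomputable def Lstar (P : Params) (T : ℕ) (s : Fin N → ℕ) : ℕ :=
  sInf {L | L ≤ tot s ∧ ∀ L' ≤ tot s, JA P T s L ≤ JA P T s L'}

/-- The smallest deadline `d(s)` carried by a task of `s` (1-indexed). -/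
noncomputable def dmin (s : Fin N → ℕ) : ℕ := sInf {j | 0 < S s j}

/-- `sa` is adjacent to `s`. -/
def Adjacent (s sa : Fin N → ℕ) : Prop :=
  (s ≠ 0 ∧ ∃ j, 1 ≤ j ∧ j ≤ dmin s ∧ sa = s + avec j) ∨
    (s = 0 ∧ ∃ j, 1 ≤ j ∧ j ≤ N ∧ sa = avec j)

/-- `L_g`: the number of excessive tasks, `max_{1 ≤ j ≤ M} max(S_j(s) − (j−1), 0)`. -/
def Lg (s : Fin N → ℕ) (M : ℕ) : ℕ := (Finset.Icc 1 M).sup fun j => S s j - (j - 1)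

/-- `Γ_j = ∑_{i=1}^j γ_i` for the parameters `γ` of Definition 2
(`γ_1 = 0`, `γ_j = min(n_j, j−1−∑_{i<j} γ_i)` for `2 ≤ j ≤ M`, `γ_j = 0` for `j > M`). -/
def Gam (s : Fin N → ℕ) (M : ℕ) : ℕ → ℕ
  | 0 => 0
  | j + 1 =>
      if 2 ≤ j + 1 ∧ j + 1 ≤ M then
        Gam s M j + min (S s (j + 1) - S s j) (j - Gam s M j)
      else Gam s M j

/-- The lean state of `s`: `n^ℓ_i = max(γ_i, n^r_i)` where `s^r = s̄_{L_g}`. -/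
def leanState (s : Fin N → ℕ) (M : ℕ) : Fin N → ℕ :=
  fun i => max (Gam s M ((i : ℕ) + 1) - Gam s M (i : ℕ)) (offload s (Lg s M) i)

/-- `F(s,L) = J^Ā_T(s̄_L) + L·C_o`. -/
noncomputable def F (P : Params) (T : ℕ) (s : Fin N → ℕ) (L : ℕ) : ℝ :=
  JNA P T (offload s L) + L * P.Co

lemma S_mono {N : ℕ} (s : Fin N → ℕ) : Monotone (S s) := by
  intro a b hab
  apply Finset.sum_le_sum_of_subset
  intro i hi
  simp only [Finset.mem_filter] at *
  exact ⟨hi.1, lt_of_lt_of_le hi.2 hab⟩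

lemma S_succ {N : ℕ} (f : Fin N → ℕ) (j : ℕ) (h : j < N) :
    S f (j + 1) = S f j + f ⟨j, h⟩ := by
  unfold S
  have : (Finset.univ.filter fun i : Fin N => (i : ℕ) < j + 1)
      = insert ⟨j, h⟩ (Finset.univ.filter fun i : Fin N => (i : ℕ) < j) := by
    ext i
    simp only [Finset.mem_filter, Finset.mem_insert, Finset.mem_univ, true_and,
      Fin.ext_iff]
    omega
  rw [this, Finset.sum_insert (by simp)]
  ring

lemma S_zero {N : ℕ} (f : Fin N → ℕ) : S f 0 = 0 := by
  unfold S
  rw [Finset.filter_false_of_mem (by simp)]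
  simp

lemma S_offload {N : ℕ} (s : Fin N → ℕ) (L j : ℕ) (hj : j ≤ N) :
    S (offload s L) j = S s j - L := by
  induction j with
  | zero => simp [S_zero]
  | succ j ih =>
    have hjN : j < N := hj
    rw [S_succ _ j hjN, S_succ s j hjN, ih (le_of_lt hjN)]
    have hmono : S s j ≤ S s j + s ⟨j, hjN⟩ := Nat.le_add_right _ _
    simp only [offload]
    rw [S_succ s j hjN]
    omega

/-- properties of L_g (with M = min(N,T)): 0 ≤ L_g ≤ |s|,
the state s̄_{L_g} satisfies S_j ≤ j−1 for j = 1,…,M, L_g is the minimal such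
offloading decision, and when T ≥ N the state s̄_{L_g} is reduced. -/
theorem Lg_spec {N : ℕ} (hN : 1 ≤ N) (T : ℕ) (hT : 1 ≤ T) (s : Fin N → ℕ) :
    Lg s (min N T) ≤ tot s ∧
      (∀ j, 1 ≤ j → j ≤ min N T → S (offload s (Lg s (min N T))) j ≤ j - 1) ∧
      (∀ L ≤ tot s,
        (∀ j, 1 ≤ j → j ≤ min N T → S (offload s L) j ≤ j - 1) →
          Lg s (min N T) ≤ L) ∧
      (N ≤ T → ∀ j, 1 ≤ j → j ≤ N → S (offload s (Lg s (min N T))) j ≤ j - 1) := by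
  set M := min N T with hM
  have hMN : M ≤ N := min_le_left _ _
  have h2 : ∀ j, 1 ≤ j → j ≤ M → S (offload s (Lg s M)) j ≤ j - 1 := by
    intro j h1 hjM
    rw [S_offload s _ j (le_trans hjM hMN)]
    have : S s j - (j - 1) ≤ Lg s M :=
      Finset.le_sup (f := fun j => S s j - (j - 1)) (Finset.mem_Icc.mpr ⟨h1, hjM⟩)
    omega
  refine ⟨?_, h2, ?_, ?_⟩
  · apply Finset.sup_le
    intro j hj
    rw [Finset.mem_Icc] at hj
    have := S_mono s (le_trans hj.2 hMN)
    unfold tot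
    omega
  · intro L _ hL
    apply Finset.sup_le
    intro j hj
    rw [Finset.mem_Icc] at hj
    have := hL j hj.1 hj.2
    rw [S_offload s L j (le_trans hj.2 hMN)] at this
    omega
  · intro hNT j h1 hjN
    exact h2 j h1 (by omega)
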